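/- arXiv:2205.07685 — 2 statements merged into one kernel-verified Lean document; each statement's English description precedes it below -/
import Mathlib

section
/- Let d ≥ 2. Then {z ∈ ℂ^{d+1} : [z,z] = −1 and Im z ∈ V₊} = {cos(t)·(g e₁) + i·sin(t)·(g e₀) : t ∈ (0,π), g ∈ G}. In other words, the tube domain T_M of de Sitter space equals the orbit G.Exp_{e₁}(i V₊^π(e₁)) of the exponential image of the bounded timelike cone at the base point e₁. -/
/-!
Write `z = x + i y`. Then `[z,z] = -1` says `[x,x] - [y,y] = -1` and `[x,y] = 0`. By the reverse
Cauchy–Schwarz inequality a nonzero vector orthogonal to the timelike `y` is spacelike, so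
`[y,y] = sin² t` and `[x,x] = -cos² t` for some `t ∈ (0, π/2]`, and normalising gives an orthonormal
pair `(u, v)` with `v ∈ V₊` and `z = cos t · u + i sin t · v`. One or two reflections carry any
vector to any other of the same nonzero norm while fixing their common orthogonal complement, so
some isometry sends `(e₁, e₀)` to `(u, v)`. Its determinant is `±1`, and precomposing with the
reflection in `e₂` fixes the sign without moving `e₀, e₁`. Finally an isometry sending `e₀` into
`V₊` preserves `V₊`, because among timelike vectors `V₊` is cut out by `0 < [w, ·]` for any
`w ∈ V₊`.
-/

open Complex Set

noncomputable section

/-- The Lorentzian form `[x,y] = x 0 * y 0 - ∑_{j=1}^d x j * y j` on `ℝ^{d+1}`. -/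
def lorR (d : ℕ) (x y : Fin (d + 1) → ℝ) : ℝ :=
  2 * (x 0 * y 0) - ∑ j, x j * y j

/-- The complex-bilinear extension of the Lorentzian form to `ℂ^{d+1}`. -/
def lorC (d : ℕ) (x y : Fin (d + 1) → ℂ) : ℂ :=
  2 * (x 0 * y 0) - ∑ j, x j * y j

/-- The open future light cone `V₊`. -/
def Vplus (d : ℕ) : Set (Fin (d + 1) → ℝ) :=
  {x | 0 < x 0 ∧ 0 < lorR d x x}

/-- The connected proper orthochronous Lorentz group, described as the set of
linear automorphisms of determinant one preserving the form and the future cone. -/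
def isLorentz (d : ℕ) (g : (Fin (d + 1) → ℝ) ≃ₗ[ℝ] (Fin (d + 1) → ℝ)) : Prop :=
  LinearMap.det (g : (Fin (d + 1) → ℝ) →ₗ[ℝ] (Fin (d + 1) → ℝ)) = 1 ∧
  (∀ x y, lorR d (g x) (g y) = lorR d x y) ∧
  (⇑g '' Vplus d = Vplus d)

namespace Module

variable {K M : Type*} [Field K] [AddCommGroup M] [Module K M] [FiniteDimensional K M]
  {x : M} {f : Dual K M}

open Matrix in
theorem det_reflection (h : f x = 2) : LinearMap.det (reflection h : M →ₗ[K] M) = -1 := by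
  let b := Module.finBasis K M
  have hmat : LinearMap.toMatrix b b (reflection h) =
      1 + replicateCol Unit (-b.repr x) * replicateRow Unit (f ∘ b) := by
    ext i j
    simp [LinearMap.toMatrix_apply, reflection_apply, Matrix.one_apply, Finsupp.single_apply,
      Matrix.mul_apply, eq_comm, sub_eq_add_neg, mul_comm]
  have hrepr : (f ∘ b) ⬝ᵥ b.repr x = f x := by
    calc (f ∘ b) ⬝ᵥ b.repr x = f (∑ i, b.repr x i • b i) := by
          simp only [map_sum, map_smul, dotProduct, Function.comp, smul_eq_mul, mul_comm]
      _ = f x := by rw [b.sum_repr]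
  rw [← LinearMap.det_toMatrix b, hmat, det_one_add_replicateCol_mul_replicateRow,
    Finsupp.coe_neg, dotProduct_neg, hrepr, h]
  norm_num

end Module

open LinearMap (BilinForm)

section BilinForm

variable {K V : Type*} [Field K] [AddCommGroup V] [Module K V] {B : BilinForm K V}

namespace LinearMap.IsOrthogonal

theorem symm {g : V ≃ₗ[K] V} (hg : B.IsOrthogonal g) : B.IsOrthogonal g.symm :=
  fun x y => by rw [← hg, g.apply_symm_apply, g.apply_symm_apply]

theorem trans {f g : V ≃ₗ[K] V} (hf : B.IsOrthogonal f) (hg : B.IsOrthogonal g) :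
    B.IsOrthogonal (f.trans g) :=
  fun x y => by rw [LinearEquiv.trans_apply, LinearEquiv.trans_apply, hg, hf]

theorem det_eq_one_or_eq_neg_one [FiniteDimensional K V] (hB : B.Nondegenerate)
    {f : V →ₗ[K] V} (hf : B.IsOrthogonal f) : LinearMap.det f = 1 ∨ LinearMap.det f = -1 := by
  let b := Module.finBasis K V
  have hcomp : B.comp f f = B := LinearMap.ext₂ hf
  have hdet := congrArg Matrix.det (BilinForm.toMatrix_comp b b B f f)
  rw [hcomp, Matrix.det_mul, Matrix.det_mul, Matrix.det_transpose, LinearMap.det_toMatrix] at hdet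
  have hne := (BilinForm.nondegenerate_iff_det_ne_zero b).mp hB
  refine mul_self_eq_one_iff.mp (mul_right_cancel₀ hne ?_)
  linear_combination -hdet

end LinearMap.IsOrthogonal

namespace LinearMap.BilinForm

def reflection (B : BilinForm K V) {w : V} (hw : B w w ≠ 0) : V ≃ₗ[K] V :=
  Module.reflection (x := w) (f := (2 / B w w) • B w) (by simp [div_mul_cancel₀ _ hw])

variable {w : V} (hw : B w w ≠ 0)

theorem reflection_apply (x : V) : B.reflection hw x = x - (2 / B w w * B w x) • w :=
  Module.reflection_apply _ _

@[simp]
theorem reflection_apply_self : B.reflection hw w = -w :=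
  Module.reflection_apply_self _

theorem reflection_apply_of_eq_zero {x : V} (hx : B w x = 0) : B.reflection hw x = x := by
  simp [reflection_apply, hx]

theorem reflection_apply_of_two_mul_eq {x : V} (hx : 2 * B w x = B w w) :
    B.reflection hw x = x - w := by
  rw [reflection_apply, div_mul_eq_mul_div, hx, div_self hw, one_smul]

theorem det_reflection [FiniteDimensional K V] :
    LinearMap.det (B.reflection hw : V →ₗ[K] V) = -1 :=
  Module.det_reflection _

theorem IsSymm.isOrthogonal_reflection (hB : B.IsSymm) : B.IsOrthogonal (B.reflection hw) := by
  intro x y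
  simp only [reflection_apply, map_sub, map_smul, LinearMap.sub_apply, LinearMap.smul_apply,
    smul_eq_mul, ← hB.eq w x]
  field_simp
  ring

/-- The reflection in `a - b`, or, when `a - b` is isotropic, the reflection in `a + b` followed by
the one in `b`. -/
theorem IsSymm.exists_isOrthogonal_apply_eq [NeZero (2 : K)] (hB : B.IsSymm) {a b : V}
    (ha : B a a ≠ 0) (hab : B a a = B b b) :
    ∃ g : V ≃ₗ[K] V, B.IsOrthogonal g ∧ g a = b ∧ ∀ x, B a x = 0 → B b x = 0 → g x = x := by
  have hsum : B (a - b) (a - b) + B (a + b) (a + b) = 2 * (2 * B a a) := by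
    simp only [map_sub, map_add, LinearMap.sub_apply, LinearMap.add_apply, hB.eq b a, ← hab]
    ring
  by_cases hsub : B (a - b) (a - b) = 0
  · have hadd : B (a + b) (a + b) ≠ 0 := by
      rw [show B (a + b) (a + b) = 2 * (2 * B a a) by linear_combination hsum - hsub]
      exact mul_ne_zero two_ne_zero (mul_ne_zero two_ne_zero ha)
    have hb : B b b ≠ 0 := hab ▸ ha
    refine ⟨(B.reflection hadd).trans (B.reflection hb),
      (hB.isOrthogonal_reflection hadd).trans (hB.isOrthogonal_reflection hb), ?_,
      fun x hax hbx => ?_⟩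
    · have h2 : 2 * B (a + b) a = B (a + b) (a + b) := by
        simp only [map_add, LinearMap.add_apply, hB.eq b a, ← hab]
        ring
      rw [LinearEquiv.trans_apply, reflection_apply_of_two_mul_eq hadd h2, sub_add_cancel_left,
        map_neg, reflection_apply_self, neg_neg]
    · rw [LinearEquiv.trans_apply, reflection_apply_of_eq_zero hadd (by simp [hax, hbx]),
        reflection_apply_of_eq_zero hb hbx]
  · refine ⟨B.reflection hsub, hB.isOrthogonal_reflection hsub, ?_, fun x hax hbx =>
      reflection_apply_of_eq_zero hsub (by simp [hax, hbx])⟩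
    have h2 : 2 * B (a - b) a = B (a - b) (a - b) := by
      simp only [map_sub, LinearMap.sub_apply, hB.eq b a, ← hab]
      ring
    rw [reflection_apply_of_two_mul_eq hsub h2, sub_sub_cancel]

end LinearMap.BilinForm

end BilinForm

section Lorentz

variable {d : ℕ}

def lorentzForm (d : ℕ) : BilinForm ℝ (Fin (d + 1) → ℝ) :=
  LinearMap.mk₂ ℝ (lorR d)
    (fun x x' y => by
      simp only [lorR, Pi.add_apply, add_mul, Finset.sum_add_distrib]; ring)
    (fun c x y => by
      simp only [lorR, Pi.smul_apply, smul_eq_mul, mul_sub, Finset.mul_sum]; ring_nf)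
    (fun x y y' => by
      simp only [lorR, Pi.add_apply, mul_add, Finset.sum_add_distrib]; ring)
    (fun c x y => by
      simp only [lorR, Pi.smul_apply, smul_eq_mul, mul_sub, Finset.mul_sum]; ring_nf)

@[simp]
theorem lorentzForm_apply (x y : Fin (d + 1) → ℝ) : lorentzForm d x y = lorR d x y := rfl

theorem lorR_comm (x y : Fin (d + 1) → ℝ) : lorR d x y = lorR d y x := by
  simp only [lorR, mul_comm]

theorem lorentzForm_isSymm : (lorentzForm d).IsSymm :=
  ⟨fun x y => lorR_comm x y⟩

theorem lorR_smul_smul (a b : ℝ) (x y : Fin (d + 1) → ℝ) :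
    lorR d (a • x) (b • y) = a * b * lorR d x y := by
  simp only [← lorentzForm_apply, map_smul, LinearMap.smul_apply, smul_eq_mul]
  ring

theorem lorR_eq_sub_sum (x y : Fin (d + 1) → ℝ) :
    lorR d x y = x 0 * y 0 - ∑ i : Fin d, x i.succ * y i.succ := by
  rw [lorR, Fin.sum_univ_succ]
  ring

theorem lorR_single_zero_left (x : Fin (d + 1) → ℝ) : lorR d (Pi.single 0 1) x = x 0 := by
  simp [lorR_eq_sub_sum, Fin.succ_ne_zero]

theorem lorR_single_left_of_ne_zero {i : Fin (d + 1)} (hi : i ≠ 0) (x : Fin (d + 1) → ℝ) :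
    lorR d (Pi.single i 1) x = -x i := by
  simp [lorR, Pi.single_apply, hi.symm]

theorem lorentzForm_nondegenerate : (lorentzForm d).Nondegenerate := by
  refine lorentzForm_isSymm.isRefl.nondegenerate_iff_separatingLeft.mpr fun x hx => ?_
  funext j
  have hj := hx (Pi.single j 1)
  rw [lorentzForm_apply, lorR_comm] at hj
  rcases eq_or_ne j 0 with rfl | hj0
  · rwa [lorR_single_zero_left] at hj
  · rw [lorR_single_left_of_ne_zero hj0, neg_eq_zero] at hj
    exact hj

theorem single_zero_mem_Vplus : (Pi.single 0 1 : Fin (d + 1) → ℝ) ∈ Vplus d :=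
  ⟨by simp, by simp [lorR_single_zero_left]⟩

theorem smul_mem_Vplus {c : ℝ} (hc : 0 < c) {x : Fin (d + 1) → ℝ} (hx : x ∈ Vplus d) :
    c • x ∈ Vplus d :=
  ⟨mul_pos hc hx.1, by rw [lorR_smul_smul]; exact mul_pos (mul_pos hc hc) hx.2⟩

theorem lorR_self_le_mul_self (x : Fin (d + 1) → ℝ) : lorR d x x ≤ x 0 * x 0 := by
  rw [lorR_eq_sub_sum, sub_le_self_iff]
  exact Finset.sum_nonneg fun i _ => mul_self_nonneg _

theorem lorR_pos_of_mem_Vplus {u w : Fin (d + 1) → ℝ} (hu : u ∈ Vplus d) (hw : w ∈ Vplus d) :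
    0 < lorR d u w := by
  obtain ⟨hu0, huu⟩ := hu
  obtain ⟨hw0, hww⟩ := hw
  rw [lorR_eq_sub_sum] at huu hww ⊢
  have hcs := Finset.sum_mul_sq_le_sq_mul_sq Finset.univ (fun i : Fin d => u i.succ)
    (fun i : Fin d => w i.succ)
  simp only [sq] at hcs
  have hU : 0 ≤ ∑ i : Fin d, u i.succ * u i.succ := Finset.sum_nonneg fun i _ => mul_self_nonneg _
  have hW : 0 ≤ ∑ i : Fin d, w i.succ * w i.succ := Finset.sum_nonneg fun i _ => mul_self_nonneg _
  have hlt : (∑ i : Fin d, u i.succ * w i.succ) ^ 2 < (u 0 * w 0) ^ 2 := by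
    calc _ ≤ (∑ i : Fin d, u i.succ * u i.succ) * ∑ i : Fin d, w i.succ * w i.succ := by
          rw [sq]; exact hcs
      _ < (u 0 * u 0) * (w 0 * w 0) := mul_lt_mul'' (by linarith) (by linarith) hU hW
      _ = (u 0 * w 0) ^ 2 := by ring
  linarith [(abs_lt.mp (abs_lt_of_sq_lt_sq hlt (mul_pos hu0 hw0).le)).2]

theorem mem_Vplus_iff_lorR_pos {u w : Fin (d + 1) → ℝ} (hu : u ∈ Vplus d)
    (hw : 0 < lorR d w w) : w ∈ Vplus d ↔ 0 < lorR d u w := by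
  refine ⟨lorR_pos_of_mem_Vplus hu, fun huw => ⟨?_, hw⟩⟩
  by_contra! hw0
  have hneg : -w ∈ Vplus d := by
    refine ⟨?_, by simpa [← lorentzForm_apply] using hw⟩
    have := hw.trans_le (lorR_self_le_mul_self w)
    rw [Pi.neg_apply, neg_pos]
    nlinarith
  have := lorR_pos_of_mem_Vplus hu hneg
  rw [← lorentzForm_apply, map_neg, lorentzForm_apply] at this
  linarith

theorem lorR_self_neg_of_lorR_eq_zero {x y : Fin (d + 1) → ℝ} (hy : y ∈ Vplus d)
    (hxy : lorR d x y = 0) (hx : x ≠ 0) : lorR d x x < 0 := by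
  obtain ⟨hy0, hyy⟩ := hy
  rw [lorR_eq_sub_sum] at hxy hyy ⊢
  have hcs := Finset.sum_mul_sq_le_sq_mul_sq Finset.univ (fun i : Fin d => x i.succ)
    (fun i : Fin d => y i.succ)
  simp only [sq, show ∑ i : Fin d, x i.succ * y i.succ = x 0 * y 0 by linarith] at hcs
  set A := ∑ i : Fin d, x i.succ * x i.succ
  set B := ∑ i : Fin d, y i.succ * y i.succ
  have hA : 0 ≤ A := Finset.sum_nonneg fun i _ => mul_self_nonneg _
  have hB : 0 ≤ B := Finset.sum_nonneg fun i _ => mul_self_nonneg _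
  by_contra! hAx
  have hx0 : x 0 * x 0 = 0 := by
    have : x 0 * x 0 * (y 0 * y 0 - B) ≤ 0 := by nlinarith [mul_nonneg hAx hB]
    exact le_antisymm (nonpos_of_mul_nonpos_left this (by linarith)) (mul_self_nonneg _)
  have hA0 : A = 0 := by linarith
  have hspace : ∀ i : Fin d, x i.succ = 0 := fun i =>
    mul_self_eq_zero.mp ((Finset.sum_eq_zero_iff_of_nonneg fun i _ => mul_self_nonneg _).mp
      hA0 i (Finset.mem_univ i))
  exact hx (funext fun j => Fin.cases (mul_self_eq_zero.mp hx0) hspace j)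

theorem image_Vplus_of_isOrthogonal {g : (Fin (d + 1) → ℝ) ≃ₗ[ℝ] (Fin (d + 1) → ℝ)}
    (hg : (lorentzForm d).IsOrthogonal g) (h0 : g (Pi.single 0 1) ∈ Vplus d) :
    g '' Vplus d = Vplus d := by
  ext w
  rw [g.image_eq_preimage_symm, mem_preimage]
  have hsymm : lorR d (g.symm w) (g.symm w) = lorR d w w := hg.symm w w
  by_cases hw : 0 < lorR d w w
  · have hpair : lorR d (g (Pi.single 0 1)) w = lorR d (Pi.single 0 1) (g.symm w) := by
      simpa using hg (Pi.single 0 1) (g.symm w)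
    rw [mem_Vplus_iff_lorR_pos single_zero_mem_Vplus (hsymm ▸ hw), mem_Vplus_iff_lorR_pos h0 hw,
      hpair]
  · exact iff_of_false (fun h => hw (hsymm ▸ h.2)) (fun h => hw h.2)

theorem exists_isOrthogonal_apply_single_zero {v : Fin (d + 1) → ℝ} (hvv : lorR d v v = 1) :
    ∃ g : (Fin (d + 1) → ℝ) ≃ₗ[ℝ] (Fin (d + 1) → ℝ),
      (lorentzForm d).IsOrthogonal g ∧ g (Pi.single 0 1) = v := by
  obtain ⟨g, hg, hg0, -⟩ := lorentzForm_isSymm.exists_isOrthogonal_apply_eq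
    (a := Pi.single 0 1) (b := v) (by simp [lorR_single_zero_left])
    (by simp [lorR_single_zero_left, hvv])
  exact ⟨g, hg, hg0⟩

theorem exists_isOrthogonal_apply_single_zero_apply_single {i : Fin (d + 1)} (hi : i ≠ 0)
    {u v : Fin (d + 1) → ℝ} (hvv : lorR d v v = 1) (huu : lorR d u u = -1) (hvu : lorR d v u = 0) :
    ∃ g : (Fin (d + 1) → ℝ) ≃ₗ[ℝ] (Fin (d + 1) → ℝ), (lorentzForm d).IsOrthogonal g ∧
      g (Pi.single 0 1) = v ∧ g (Pi.single i 1) = u := by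
  obtain ⟨g₁, hg₁, hg₁0⟩ := exists_isOrthogonal_apply_single_zero hvv
  obtain ⟨g₂, hg₂, hg₂i, hg₂0⟩ := lorentzForm_isSymm.exists_isOrthogonal_apply_eq
    (a := Pi.single i 1) (b := g₁.symm u) (by simp [lorR_single_left_of_ne_zero hi])
    (by simp [lorR_single_left_of_ne_zero hi, (hg₁.symm u u : lorR d _ _ = _), huu])
  have hortho : lorR d (g₁.symm u) (Pi.single 0 1) = 0 := by
    rw [← g₁.symm_apply_eq.mpr hg₁0.symm, ← lorentzForm_apply, hg₁.symm, lorentzForm_apply,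
      lorR_comm, hvu]
  refine ⟨g₂.trans g₁, hg₂.trans hg₁, ?_, ?_⟩
  · rw [LinearEquiv.trans_apply,
      hg₂0 _ (by simp [lorR_single_left_of_ne_zero hi, Pi.single_eq_of_ne hi]) hortho, hg₁0]
  · rw [LinearEquiv.trans_apply, hg₂i, g₁.apply_symm_apply]

theorem exists_isLorentz_of_isOrthogonal {i k : Fin (d + 1)} (hk0 : k ≠ 0) (hki : k ≠ i)
    {g : (Fin (d + 1) → ℝ) ≃ₗ[ℝ] (Fin (d + 1) → ℝ)} (hg : (lorentzForm d).IsOrthogonal g)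
    (h0 : g (Pi.single 0 1) ∈ Vplus d) :
    ∃ g' : (Fin (d + 1) → ℝ) ≃ₗ[ℝ] (Fin (d + 1) → ℝ), isLorentz d g' ∧
      g' (Pi.single 0 1) = g (Pi.single 0 1) ∧ g' (Pi.single i 1) = g (Pi.single i 1) := by
  rcases LinearMap.IsOrthogonal.det_eq_one_or_eq_neg_one lorentzForm_nondegenerate
    (f := (g : (Fin (d + 1) → ℝ) →ₗ[ℝ] (Fin (d + 1) → ℝ))) hg with hdet | hdet
  · exact ⟨g, ⟨hdet, hg, image_Vplus_of_isOrthogonal hg h0⟩, rfl, rfl⟩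
  have hk : lorentzForm d (Pi.single k 1) (Pi.single k 1) ≠ 0 := by
    simp [lorR_single_left_of_ne_zero hk0]
  have hfix : ∀ j, k ≠ j → (lorentzForm d).reflection hk (Pi.single j 1) = Pi.single j 1 :=
    fun j hj => BilinForm.reflection_apply_of_eq_zero hk
      (by simp [lorR_single_left_of_ne_zero hk0, Pi.single_eq_of_ne hj])
  have hrg := (lorentzForm_isSymm.isOrthogonal_reflection hk).trans hg
  refine ⟨((lorentzForm d).reflection hk).trans g, ⟨?_, hrg, image_Vplus_of_isOrthogonal hrg ?_⟩,
    ?_, ?_⟩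
  · rw [LinearEquiv.coe_trans, LinearMap.det_comp, hdet, BilinForm.det_reflection]
    norm_num
  · rwa [LinearEquiv.trans_apply, hfix 0 hk0]
  · rw [LinearEquiv.trans_apply, hfix 0 hk0]
  · rw [LinearEquiv.trans_apply, hfix i hki]

end Lorentz

section Tube

variable {d : ℕ}

/-- `Exp_u (i t v)` in the paper's notation, for an orthonormal pair `(u, v)`. -/
def deSitterExp (t : ℝ) (u v : Fin (d + 1) → ℝ) : Fin (d + 1) → ℂ :=
  fun j => (Real.cos t * u j : ℝ) + Complex.I * (Real.sin t * v j : ℝ)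

theorem re_deSitterExp (t : ℝ) (u v : Fin (d + 1) → ℝ) :
    (fun j => (deSitterExp t u v j).re) = Real.cos t • u := by
  funext j
  simp [deSitterExp, -Complex.ofReal_mul]

theorem im_deSitterExp (t : ℝ) (u v : Fin (d + 1) → ℝ) :
    (fun j => (deSitterExp t u v j).im) = Real.sin t • v := by
  funext j
  simp [deSitterExp, -Complex.ofReal_mul]

theorem lorC_self_eq (z : Fin (d + 1) → ℂ) :
    lorC d z z = ⟨lorR d (fun j => (z j).re) (fun j => (z j).re) -
      lorR d (fun j => (z j).im) (fun j => (z j).im),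
      2 * lorR d (fun j => (z j).re) (fun j => (z j).im)⟩ := by
  apply Complex.ext <;>
    simp only [lorC, lorR, Complex.sub_re, Complex.sub_im, Complex.re_sum, Complex.im_sum,
      Complex.mul_re, Complex.mul_im, Complex.re_ofNat, Complex.im_ofNat, Finset.sum_sub_distrib,
      mul_comm (z _).im, ← two_mul, ← Finset.mul_sum] <;>
    ring

theorem deSitterExp_mem_tube {i : Fin (d + 1)} (hi : i ≠ 0) {t : ℝ} (ht : t ∈ Ioo 0 Real.pi)
    {g : (Fin (d + 1) → ℝ) ≃ₗ[ℝ] (Fin (d + 1) → ℝ)} (hg : (lorentzForm d).IsOrthogonal g)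
    (h0 : g (Pi.single 0 1) ∈ Vplus d) :
    lorC d (deSitterExp t (g (Pi.single i 1)) (g (Pi.single 0 1)))
      (deSitterExp t (g (Pi.single i 1)) (g (Pi.single 0 1))) = -1 ∧
    (fun j => (deSitterExp t (g (Pi.single i 1)) (g (Pi.single 0 1)) j).im) ∈ Vplus d := by
  have huu : lorR d (g (Pi.single i 1)) (g (Pi.single i 1)) = -1 :=
    (hg _ _).trans (by simp [lorR_single_left_of_ne_zero hi])
  have hvv : lorR d (g (Pi.single 0 1)) (g (Pi.single 0 1)) = 1 :=
    (hg _ _).trans (by simp [lorR_single_zero_left])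
  have huv : lorR d (g (Pi.single i 1)) (g (Pi.single 0 1)) = 0 :=
    (hg _ _).trans (by simp [lorR_single_left_of_ne_zero hi, Pi.single_eq_of_ne hi])
  refine ⟨?_, by
    rw [im_deSitterExp]
    exact smul_mem_Vplus (Real.sin_pos_of_pos_of_lt_pi ht.1 ht.2) h0⟩
  rw [lorC_self_eq, re_deSitterExp, im_deSitterExp, lorR_smul_smul, lorR_smul_smul,
    lorR_smul_smul, huu, hvv, huv]
  apply Complex.ext <;> simp
  nlinarith [Real.sin_sq_add_cos_sq t]

theorem exists_orthogonal_lorR_self_eq_neg_one {i : Fin (d + 1)} (hi : i ≠ 0)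
    {v : Fin (d + 1) → ℝ} (hvv : lorR d v v = 1) :
    ∃ u, lorR d u u = -1 ∧ lorR d v u = 0 := by
  obtain ⟨g, hg, hg0⟩ := exists_isOrthogonal_apply_single_zero hvv
  refine ⟨g (Pi.single i 1), (hg _ _).trans ?_, hg0 ▸ (hg _ _).trans ?_⟩
  · simp [lorR_single_left_of_ne_zero hi]
  · simp [lorR_single_zero_left, Pi.single_eq_of_ne hi.symm]

theorem exists_sin_eq_sqrt_cos_eq_sqrt {s : ℝ} (hs : 0 < s) (hs1 : s ≤ 1) :
    ∃ t ∈ Ioo 0 Real.pi, Real.sin t = √s ∧ Real.cos t = √(1 - s) := by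
  refine ⟨Real.arcsin √s, ⟨Real.arcsin_pos.mpr (Real.sqrt_pos.mpr hs),
    (Real.arcsin_le_pi_div_two _).trans_lt (by linarith [Real.pi_pos])⟩,
    Real.sin_arcsin (by linarith [Real.sqrt_nonneg s]) (Real.sqrt_le_one.mpr hs1), ?_⟩
  rw [Real.cos_arcsin, Real.sq_sqrt hs.le]

theorem exists_eq_cos_smul_sin_smul {i : Fin (d + 1)} (hi : i ≠ 0) {x y : Fin (d + 1) → ℝ}
    (hy : y ∈ Vplus d) (hxy : lorR d x y = 0) (hxx : lorR d x x - lorR d y y = -1) :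
    ∃ t ∈ Ioo 0 Real.pi, ∃ u v : Fin (d + 1) → ℝ, v ∈ Vplus d ∧ lorR d v v = 1 ∧
      lorR d u u = -1 ∧ lorR d v u = 0 ∧ x = Real.cos t • u ∧ y = Real.sin t • v := by
  set s := lorR d y y
  have hs : 0 < s := hy.2
  have hx_nonpos : lorR d x x ≤ 0 := by
    rcases eq_or_ne x 0 with rfl | hx
    · simp [lorR]
    · exact (lorR_self_neg_of_lorR_eq_zero hy hxy hx).le
  obtain ⟨t, ht, hsin, hcos⟩ := exists_sin_eq_sqrt_cos_eq_sqrt hs (by linarith)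
  have hsin_pos : 0 < Real.sin t := hsin ▸ Real.sqrt_pos.mpr hs
  have hvv : lorR d ((Real.sin t)⁻¹ • y) ((Real.sin t)⁻¹ • y) = 1 := by
    rw [lorR_smul_smul, hsin, ← mul_inv, Real.mul_self_sqrt hs.le, inv_mul_cancel₀ hs.ne']
  have hy' : y = Real.sin t • (Real.sin t)⁻¹ • y := (smul_inv_smul₀ hsin_pos.ne' y).symm
  have hv := smul_mem_Vplus (inv_pos.mpr hsin_pos) hy
  rcases eq_or_ne x 0 with rfl | hx
  · obtain ⟨u, huu, hvu⟩ := exists_orthogonal_lorR_self_eq_neg_one hi hvv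
    have hs_eq : s = 1 := by linarith [show lorR d 0 0 = 0 by simp [lorR]]
    refine ⟨t, ht, u, _, hv, hvv, huu, hvu, ?_, hy'⟩
    rw [hcos, hs_eq, sub_self, Real.sqrt_zero, zero_smul]
  · have hs_lt : s < 1 := by linarith [lorR_self_neg_of_lorR_eq_zero hy hxy hx]
    have hcos_pos : 0 < Real.cos t := hcos ▸ Real.sqrt_pos.mpr (by linarith)
    refine ⟨t, ht, (Real.cos t)⁻¹ • x, _, hv, hvv, ?_, ?_,
      (smul_inv_smul₀ hcos_pos.ne' x).symm, hy'⟩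
    · rw [lorR_smul_smul, hcos, ← mul_inv, Real.mul_self_sqrt (by linarith),
        show lorR d x x = -(1 - s) by linarith, mul_neg, inv_mul_cancel₀ (by linarith)]
    · rw [lorR_comm, lorR_smul_smul, hxy, mul_zero]

theorem exists_isOrthogonal_of_mem_tube {i : Fin (d + 1)} (hi : i ≠ 0) {z : Fin (d + 1) → ℂ}
    (hz : lorC d z z = -1) (hy : (fun j => (z j).im) ∈ Vplus d) :
    ∃ t ∈ Ioo 0 Real.pi, ∃ g : (Fin (d + 1) → ℝ) ≃ₗ[ℝ] (Fin (d + 1) → ℝ),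
      (lorentzForm d).IsOrthogonal g ∧ g (Pi.single 0 1) ∈ Vplus d ∧
      z = deSitterExp t (g (Pi.single i 1)) (g (Pi.single 0 1)) := by
  rw [lorC_self_eq, Complex.ext_iff] at hz
  obtain ⟨t, ht, u, v, hv, hvv, huu, hvu, hre, him⟩ :=
    exists_eq_cos_smul_sin_smul hi hy (by simpa using hz.2) (by simpa using hz.1)
  obtain ⟨g, hg, hg0, hgi⟩ := exists_isOrthogonal_apply_single_zero_apply_single hi hvv huu hvu
  refine ⟨t, ht, g, hg, hg0 ▸ hv, funext fun j => Complex.ext ?_ ?_⟩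
  · rw [hg0, hgi]
    exact congrFun (hre.trans (re_deSitterExp t u v).symm) j
  · rw [hg0, hgi]
    exact congrFun (him.trans (im_deSitterExp t u v).symm) j

end Tube

theorem tube_eq_orbit (d : ℕ) (hd : 2 ≤ d) :
    {z : Fin (d + 1) → ℂ | lorC d z z = -1 ∧ (fun j => (z j).im) ∈ Vplus d} =
    {z : Fin (d + 1) → ℂ |
      ∃ t ∈ Ioo (0 : ℝ) Real.pi,
        ∃ g : (Fin (d + 1) → ℝ) ≃ₗ[ℝ] (Fin (d + 1) → ℝ), isLorentz d g ∧
          z = fun j =>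
            (Real.cos t * g (Pi.single (1 : Fin (d + 1)) (1 : ℝ)) j : ℝ) +
              Complex.I * (Real.sin t * g (Pi.single (0 : Fin (d + 1)) (1 : ℝ)) j : ℝ)} := by
  obtain ⟨k, rfl⟩ := Nat.exists_eq_add_of_le' hd
  have h10 : (1 : Fin (k + 2 + 1)) ≠ 0 := by simp
  have h20 : (2 : Fin (k + 2 + 1)) ≠ 0 := by simp [Fin.ext_iff, Nat.mod_eq_of_lt]
  have h21 : (2 : Fin (k + 2 + 1)) ≠ 1 := by simp [Fin.ext_iff, Nat.mod_eq_of_lt]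
  ext z
  constructor
  · rintro ⟨hz, hy⟩
    obtain ⟨t, ht, g, hg, hg0, rfl⟩ := exists_isOrthogonal_of_mem_tube h10 hz hy
    obtain ⟨g', hg', h0, h1⟩ := exists_isLorentz_of_isOrthogonal h20 h21 hg hg0
    exact ⟨t, ht, g', hg', by rw [h0, h1]; rfl⟩
  · rintro ⟨t, ht, g, ⟨-, hg, hcone⟩, rfl⟩
    exact deSitterExp_mem_tube h10 ht hg (hcone ▸ mem_image_of_mem g single_zero_mem_Vplus)

end
end

section
/- Let d ≥ 2. The fixed-point set of τ̄_h in the tube domain of de Sitter space admits the explicit parametrization: {z ∈ ℂ^{d+1} : [z,z] = −1, Im z ∈ V₊, τ̄_h(z) = z} = {(i·sin(s)·cosh(τ), i·sin(s)·sinh(τ), cos(s)·u) : τ ∈ ℝ, s ∈ (0,π), u ∈ ℝ^{d−1} with euclidean norm ‖u‖ = 1}, where the displayed vector has 0-th coordinate i·sin(s)·cosh(τ), 1-st coordinate i·sin(s)·sinh(τ), and coordinates 2,…,d given by cos(s)·u. (This is the orbit G^h.Exp_{e₂}(i V₊^π(e₂)^{−τ_h}) of the centralizer G^h = exp(ℝ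 h)·SO(d−1) of the boost h.) -/
open Complex Set

noncomputable section

/-- The antilinear involution `τ̄_h`. -/
def tauBar (d : ℕ) (z : Fin (d + 1) → ℂ) : Fin (d + 1) → ℂ :=
  fun j =>
    if j = 0 then -(starRingEnd ℂ) (z 0)
    else if j = 1 then -(starRingEnd ℂ) (z 1)
    else (starRingEnd ℂ) (z j)

/-!
A fixed point of `τ̄_h` is a vector `(i a, i b, x)` with `a, b` real and `x ∈ ℝ^{d-1}`. For it,
`[z,z] = -1` reads `a² - b² + ‖x‖² = 1` and `Im z ∈ V₊` reads `a > |b|`. Hence `‖x‖ < 1`, so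
`x = cos s • u` with `s = arccos ‖x‖ ∈ (0, π/2]` and `‖u‖ = 1` (for `x = 0` any unit vector will
do, which is where `d ≥ 2` enters); then `a² - b² = sin² s > 0`, and the branch `a > 0` of this
hyperbola is `(sin s cosh τ, sin s sinh τ)`.
-/

lemma exists_eq_mul_cosh_and_eq_mul_sinh {a b r : ℝ} (ha : 0 < a) (hr : 0 < r)
    (h : a ^ 2 - b ^ 2 = r ^ 2) : ∃ τ : ℝ, a = r * Real.cosh τ ∧ b = r * Real.sinh τ := by
  refine ⟨Real.arsinh (b / r), ?_, by rw [Real.sinh_arsinh]; field_simp⟩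
  have hsq : 1 + (b / r) ^ 2 = (a / r) ^ 2 := by field_simp; linarith
  rw [Real.cosh_arsinh, hsq, Real.sqrt_sq (by positivity)]
  field_simp

lemma exists_eq_cos_smul_of_norm_lt_one {E : Type*} [NormedAddCommGroup E] [NormedSpace ℝ E]
    [Nontrivial E] {x : E} (hx : ‖x‖ < 1) :
    ∃ s ∈ Ioo 0 Real.pi, ∃ u : E, ‖u‖ = 1 ∧ x = Real.cos s • u := by
  have hcos : Real.cos (Real.arccos ‖x‖) = ‖x‖ :=
    Real.cos_arccos (by linarith [norm_nonneg x]) hx.le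
  refine ⟨Real.arccos ‖x‖,
    ⟨Real.arccos_pos.2 hx, Real.arccos_lt_pi.2 (by linarith [norm_nonneg x])⟩, ?_⟩
  rw [hcos]
  rcases eq_or_ne x 0 with rfl | hx0
  · obtain ⟨u, hu⟩ := exists_norm_eq E zero_le_one
    exact ⟨u, hu, by simp⟩
  · exact ⟨‖x‖⁻¹ • x, by simp [norm_smul, hx0], by simp [smul_smul, hx0]⟩

lemma hyperbola_sphere_param_iff {E : Type*} [NormedAddCommGroup E] [NormedSpace ℝ E]
    [Nontrivial E] {a b : ℝ} {x : E} :
    (0 < a ∧ b ^ 2 < a ^ 2 ∧ a ^ 2 - b ^ 2 + ‖x‖ ^ 2 = 1) ↔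
      ∃ τ : ℝ, ∃ s ∈ Ioo 0 Real.pi, ∃ u : E, ‖u‖ = 1 ∧ a = Real.sin s * Real.cosh τ ∧
        b = Real.sin s * Real.sinh τ ∧ x = Real.cos s • u := by
  constructor
  · rintro ⟨ha, hab, hx⟩
    obtain ⟨s, hs, u, hu, rfl⟩ :=
      exists_eq_cos_smul_of_norm_lt_one (x := x) (by nlinarith [norm_nonneg x])
    have hsin : a ^ 2 - b ^ 2 = Real.sin s ^ 2 := by
      rw [norm_smul, hu, mul_one, Real.norm_eq_abs, sq_abs] at hx
      linarith [Real.sin_sq_add_cos_sq s]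
    obtain ⟨τ, rfl, rfl⟩ :=
      exists_eq_mul_cosh_and_eq_mul_sinh ha (Real.sin_pos_of_pos_of_lt_pi hs.1 hs.2) hsin
    exact ⟨τ, s, hs, u, hu, rfl, rfl, rfl⟩
  · rintro ⟨τ, s, hs, u, hu, rfl, rfl, rfl⟩
    have hsin := Real.sin_pos_of_pos_of_lt_pi hs.1 hs.2
    have hcosh := Real.cosh_sq_sub_sinh_sq τ
    refine ⟨by positivity, by nlinarith [mul_pos hsin hsin], ?_⟩
    rw [norm_smul, hu, mul_one, Real.norm_eq_abs, sq_abs]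
    linear_combination Real.sin s ^ 2 * hcosh + Real.sin_sq_add_cos_sq s

lemma Fin.funext_iff_zero_one_succ_succ {α : Type*} {n : ℕ} {f g : Fin (n + 3) → α} :
    f = g ↔ f 0 = g 0 ∧ f 1 = g 1 ∧ ∀ k : Fin (n + 1), f k.succ.succ = g k.succ.succ := by
  rw [funext_iff, Fin.forall_fin_succ, Fin.forall_fin_succ, Fin.succ_zero_eq_one]

lemma Fin.sum_univ_zero_one_succ_succ {M : Type*} [AddCommMonoid M] {n : ℕ}
    (f : Fin (n + 3) → M) : ∑ j, f j = f 0 + f 1 + ∑ k : Fin (n + 1), f k.succ.succ := by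
  rw [Fin.sum_univ_succ, Fin.sum_univ_succ, Fin.succ_zero_eq_one, ← add_assoc]

lemma Complex.neg_conj_eq_self_iff {w : ℂ} : -starRingEnd ℂ w = w ↔ ∃ a : ℝ, w = I * a := by
  constructor
  · intro h
    refine ⟨w.im, Complex.ext ?_ (by simp)⟩
    have := congrArg re h
    simp only [neg_re, conj_re] at this
    simp only [mul_re, I_re, ofReal_re, zero_mul, I_im, ofReal_im, mul_zero, sub_zero]
    linarith
  · rintro ⟨a, rfl⟩
    simp only [map_mul, conj_I, conj_ofReal]
    ring

/-- The point `(i a, i b, x)` of `ℂ^{n+3}`, indexed exactly as in the statement (with `d = n + 2`),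
so that its right-hand side is `tauBarFixedPoint (sin s * cosh τ) (sin s * sinh τ) (cos s • u)`
up to `rfl`. -/
def tauBarFixedPoint {n : ℕ} (a b : ℝ) (x : EuclideanSpace ℝ (Fin (n + 1))) :
    Fin (n + 3) → ℂ :=
  fun j => if j = 0 then I * a else if j = 1 then I * b
    else ((x ⟨j.val - 2, by have := j.isLt; omega⟩ : ℝ) : ℂ)

section tauBarFixedPoint

variable {n : ℕ} {a b : ℝ} {x : EuclideanSpace ℝ (Fin (n + 1))}

@[simp] lemma tauBarFixedPoint_zero : tauBarFixedPoint a b x 0 = I * a := rfl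

@[simp] lemma tauBarFixedPoint_one : tauBarFixedPoint a b x 1 = I * b := by
  simp [tauBarFixedPoint]

@[simp] lemma tauBarFixedPoint_succ_succ (k : Fin (n + 1)) :
    tauBarFixedPoint a b x k.succ.succ = x k := by
  simp only [tauBarFixedPoint, Fin.succ_ne_zero, Fin.succ_succ_ne_one, if_false]
  rfl

lemma tauBar_eq_self_iff {z : Fin (n + 3) → ℂ} :
    tauBar (n + 2) z = z ↔ ∃ (a b : ℝ) (x : EuclideanSpace ℝ (Fin (n + 1))),
      z = tauBarFixedPoint a b x := by
  simp only [Fin.funext_iff_zero_one_succ_succ (f := tauBar _ z), tauBar, Fin.succ_ne_zero,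
    Fin.succ_succ_ne_one, one_ne_zero, if_true, if_false, neg_conj_eq_self_iff, conj_eq_iff_real]
  constructor
  · rintro ⟨⟨a, ha⟩, ⟨b, hb⟩, hx⟩
    choose x hx using hx
    exact ⟨a, b, WithLp.toLp 2 x, Fin.funext_iff_zero_one_succ_succ.2 ⟨ha, hb, by simpa using hx⟩⟩
  · rintro ⟨a, b, x, rfl⟩
    simp

lemma lorC_tauBarFixedPoint_eq_neg_one_iff :
    lorC (n + 2) (tauBarFixedPoint a b x) (tauBarFixedPoint a b x) = -1 ↔
      a ^ 2 - b ^ 2 + ‖x‖ ^ 2 = 1 := by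
  have hx : ‖x‖ ^ 2 = ∑ k, x k * x k := by
    rw [EuclideanSpace.norm_sq_eq]; simp [sq]
  rw [lorC, Fin.sum_univ_zero_one_succ_succ]
  simp only [tauBarFixedPoint_zero, tauBarFixedPoint_one, tauBarFixedPoint_succ_succ,
    ← ofReal_mul, ← ofReal_sum, ← hx]
  have hlor : 2 * (I * a * (I * a)) - (I * a * (I * a) + I * b * (I * b) + ((‖x‖ ^ 2 : ℝ) : ℂ))
      = ((b ^ 2 - a ^ 2 - ‖x‖ ^ 2 : ℝ) : ℂ) := by
    push_cast; linear_combination (a ^ 2 - b ^ 2 : ℂ) * I_sq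
  rw [hlor, ← ofReal_one, ← ofReal_neg, ofReal_inj]
  constructor <;> intro h <;> linarith

lemma im_tauBarFixedPoint_mem_Vplus_iff :
    (fun j => (tauBarFixedPoint a b x j).im) ∈ Vplus (n + 2) ↔ 0 < a ∧ b ^ 2 < a ^ 2 := by
  rw [Vplus, mem_ofPred_eq, lorR, Fin.sum_univ_zero_one_succ_succ]
  simp only [tauBarFixedPoint_zero, tauBarFixedPoint_one, tauBarFixedPoint_succ_succ, mul_im,
    I_re, I_im, ofReal_re, ofReal_im, mul_zero, one_mul, zero_add, Finset.sum_const_zero,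
    add_zero, sub_pos, and_congr_right_iff]
  intro _
  constructor <;> intro h <;> nlinarith

end tauBarFixedPoint

lemma tube_and_tauBar_fixed_iff {n : ℕ} {z : Fin (n + 3) → ℂ} :
    ((lorC (n + 2) z z = -1 ∧ (fun j => (z j).im) ∈ Vplus (n + 2)) ∧ tauBar (n + 2) z = z) ↔
      ∃ (a b : ℝ) (x : EuclideanSpace ℝ (Fin (n + 1))), z = tauBarFixedPoint a b x ∧
        0 < a ∧ b ^ 2 < a ^ 2 ∧ a ^ 2 - b ^ 2 + ‖x‖ ^ 2 = 1 := by
  constructor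
  · rintro ⟨⟨hlor, hV⟩, hfix⟩
    obtain ⟨a, b, x, rfl⟩ := tauBar_eq_self_iff.1 hfix
    rw [lorC_tauBarFixedPoint_eq_neg_one_iff] at hlor
    rw [im_tauBarFixedPoint_mem_Vplus_iff] at hV
    exact ⟨a, b, x, rfl, hV.1, hV.2, hlor⟩
  · rintro ⟨a, b, x, rfl, ha, hab, hx⟩
    exact ⟨⟨lorC_tauBarFixedPoint_eq_neg_one_iff.2 hx,
      im_tauBarFixedPoint_mem_Vplus_iff.2 ⟨ha, hab⟩⟩, tauBar_eq_self_iff.2 ⟨a, b, x, rfl⟩⟩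

theorem tube_fixed_points (d : ℕ) (hd : 2 ≤ d) :
    {z : Fin (d + 1) → ℂ |
        (lorC d z z = -1 ∧ (fun j => (z j).im) ∈ Vplus d) ∧ tauBar d z = z} =
    {z : Fin (d + 1) → ℂ |
      ∃ τ : ℝ, ∃ s ∈ Ioo (0 : ℝ) Real.pi, ∃ u : EuclideanSpace ℝ (Fin (d - 1)),
        ‖u‖ = 1 ∧
        z = fun j =>
          if j = 0 then Complex.I * (Real.sin s * Real.cosh τ : ℝ)
          else if j = 1 then Complex.I * (Real.sin s * Real.sinh τ : ℝ)
          else ((Real.cos s * u ⟨j.val - 2, by have := j.isLt; omega⟩ : ℝ) : ℂ)} := by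
  obtain ⟨n, rfl⟩ : ∃ n, d = n + 2 := ⟨d - 2, by omega⟩
  ext z
  rw [mem_ofPred_eq, mem_ofPred_eq, tube_and_tauBar_fixed_iff]
  constructor
  · rintro ⟨a, b, x, rfl, hparam⟩
    obtain ⟨τ, s, hs, u, hu, rfl, rfl, rfl⟩ := hyperbola_sphere_param_iff.1 hparam
    exact ⟨τ, s, hs, u, hu, rfl⟩
  · rintro ⟨τ, s, hs, u, hu, rfl⟩
    exact ⟨_, _, Real.cos s • u, rfl, hyperbola_sphere_param_iff.2 ⟨τ, s, hs, u, hu, rfl, rfl, rfl⟩⟩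

end
end
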